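/- Let u : ℂ → ℂⁿ be a C¹ map, let v : ℂ → ℂⁿ be a C¹ map with compact support contained in D, and let τ > 0. Then ∫_D ⟨∂u/∂z̄(z), v(z)⟩ e^{τφ(z)} dA = − ∫_D ⟨u(z), ∂v/∂z(z) + (τ/2)·φ'(z)·v(z)⟩ e^{τφ(z)} dA, where ⟨·,·⟩ is the Hermitian inner product on ℂⁿ, φ'(x+iy) = 1 + x, and dA is Lebesgue measure on ℂ. -/

import Mathlib

open Complex MeasureTheory Metric Filter Topology
open scoped InnerProductSpace

/-- The Wirtinger derivative `∂u/∂z̄ = (1/2)(∂u/∂x + i • ∂u/∂y)`. -/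
noncomputable def dbar {E : Type*} [NormedAddCommGroup E] [NormedSpace ℂ E]
    (u : ℂ → E) (z : ℂ) : E :=
  (2⁻¹ : ℝ) • (fderiv ℝ u z 1 + Complex.I • fderiv ℝ u z Complex.I)

/-- The Wirtinger derivative `∂u/∂z = (1/2)(∂u/∂x - i • ∂u/∂y)`. -/
noncomputable def dz {E : Type*} [NormedAddCommGroup E] [NormedSpace ℂ E]
    (u : ℂ → E) (z : ℂ) : E :=
  (2⁻¹ : ℝ) • (fderiv ℝ u z 1 - Complex.I • fderiv ℝ u z Complex.I)

/-- The weight `φ(x+iy) = x + x²/2`. -/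
noncomputable def phi (z : ℂ) : ℝ := z.re + z.re ^ 2 / 2

/-! Because the inner product is conjugate-linear in its first slot, the Leibniz rule gives
`∂/∂z (⟨u, v⟩ e^{τφ}) = ⟨∂u/∂z̄, v⟩ e^{τφ} + ⟨u, ∂v/∂z⟩ e^{τφ} + ⟨u, v⟩ ∂(e^{τφ})/∂z`, and
`∂(e^{τφ})/∂z = (τ/2) φ' e^{τφ}` since `φ` depends on `x` only. The function `⟨u, v⟩ e^{τφ}` is
`C¹` with compact support, so the integral over `ℂ` of its `∂/∂z`, a combination of two directional
derivatives, vanishes. All integrands vanish off `tsupport v ⊆ D`, so integrating over `D` is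
integrating over `ℂ`. -/

section Wirtinger

variable {E : Type*} [NormedAddCommGroup E] [NormedSpace ℂ E] {u : ℂ → E} {L : ℂ →L[ℝ] E} {z : ℂ}

theorem HasFDerivAt.dz_eq (h : HasFDerivAt u L z) :
    dz u z = (2⁻¹ : ℝ) • (L 1 - I • L I) := by
  rw [dz, h.fderiv]

theorem HasFDerivAt.dbar_eq (h : HasFDerivAt u L z) :
    dbar u z = (2⁻¹ : ℝ) • (L 1 + I • L I) := by
  rw [dbar, h.fderiv]

theorem dz_of_notMem_tsupport (h : z ∉ tsupport u) : dz u z = 0 := by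
  simp [dz, fderiv_of_notMem_tsupport ℝ h]

theorem ContDiff.continuous_dz (hu : ContDiff ℝ 1 u) : Continuous (dz u) := by
  have h := hu.continuous_fderiv one_ne_zero
  unfold dz
  fun_prop

theorem ContDiff.continuous_dbar (hu : ContDiff ℝ 1 u) : Continuous (dbar u) := by
  have h := hu.continuous_fderiv one_ne_zero
  unfold dbar
  fun_prop

theorem HasCompactSupport.dz (hu : HasCompactSupport u) : HasCompactSupport (dz u) :=
  hu.fderiv ℝ |>.comp_left (g := fun L : ℂ →L[ℝ] E => (2⁻¹ : ℝ) • (L 1 - I • L I))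
    (by simp)

theorem integral_dz_eq_zero (hu : ContDiff ℝ 1 u) (hsupp : HasCompactSupport u) :
    ∫ z, dz u z = 0 := by
  have hint (w : ℂ) : Integrable fun z => fderiv ℝ u z w :=
    ((hu.continuous_fderiv one_ne_zero).clm_apply continuous_const).integrable_of_hasCompactSupport
      (hsupp.fderiv_apply ℝ w)
  have hintegral_fderiv (w : ℂ) : ∫ z, fderiv ℝ u z w = 0 := by
    simpa using integral_smul_fderiv_eq_neg_fderiv_smul_of_integrable (f := fun _ => (1 : ℝ))
      (g := u) (v := w) (by simp) (by simpa using hint w)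
      (by simpa using hu.continuous.integrable_of_hasCompactSupport hsupp)
      (fun _ _ => differentiableAt_const _) (fun z _ => hu.differentiable one_ne_zero z)
  have hint_I : Integrable fun z => I • fderiv ℝ u z I := (hint I).smul I
  simp only [dz]
  rw [integral_smul, integral_sub (hint 1) hint_I, integral_smul, hintegral_fderiv, hintegral_fderiv]
  simp

end Wirtinger

section ProductRules

variable {z : ℂ}

theorem dz_mul {f g : ℂ → ℂ} (hf : DifferentiableAt ℝ f z) (hg : DifferentiableAt ℝ g z) :
    dz (fun w => f w * g w) z = dz f z * g z + f z * dz g z := by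
  rw [(hf.hasFDerivAt.fun_mul hg.hasFDerivAt).dz_eq, hf.hasFDerivAt.dz_eq, hg.hasFDerivAt.dz_eq]
  simp only [add_apply, smul_apply, smul_eq_mul, real_smul]
  ring

variable {E : Type*} [NormedAddCommGroup E] [InnerProductSpace ℂ E] {u v : ℂ → E}

theorem dz_inner (hu : DifferentiableAt ℝ u z) (hv : DifferentiableAt ℝ v z) :
    dz (fun w => ⟪u w, v w⟫_ℂ) z = ⟪dbar u z, v z⟫_ℂ + ⟪u z, dz v z⟫_ℂ := by
  rw [(hu.hasFDerivAt.inner ℂ hv.hasFDerivAt).dz_eq, hu.hasFDerivAt.dbar_eq,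
    hv.hasFDerivAt.dz_eq]
  simp only [ContinuousLinearMap.comp_apply, ContinuousLinearMap.prod_apply, fderivInnerCLM_apply,
    inner_smul_left_eq_smul, inner_smul_right_eq_smul, inner_add_left, inner_sub_right,
    inner_smul_left, conj_I, real_smul, smul_eq_mul]
  ring

end ProductRules

theorem contDiff_phi : ContDiff ℝ 1 phi :=
  reCLM.contDiff.add ((reCLM.contDiff.pow 2).div_const 2)

theorem contDiff_exp_phi (τ : ℝ) : ContDiff ℝ 1 fun w => (Real.exp (τ * phi w) : ℂ) :=
  ofRealCLM.contDiff.comp (Real.contDiff_exp.comp (contDiff_const.mul contDiff_phi))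

theorem hasFDerivAt_phi (z : ℂ) : HasFDerivAt phi ((1 + z.re) • reCLM) z := by
  have hpoly : HasDerivAt (fun x : ℝ => x + x ^ 2 / 2) (1 + z.re) z.re :=
    ((hasDerivAt_id _).add ((hasDerivAt_pow 2 _).div_const 2)).congr_deriv (by simp)
  exact hpoly.comp_hasFDerivAt z reCLM.hasFDerivAt

theorem dz_exp_phi (τ : ℝ) (z : ℂ) :
    dz (fun w => (Real.exp (τ * phi w) : ℂ)) z
      = ((τ / 2) * (1 + z.re) : ℝ) * (Real.exp (τ * phi z) : ℂ) := by
  have hexp : HasFDerivAt (fun w => (Real.exp (τ * phi w) : ℂ))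
      (ofRealCLM.comp (Real.exp (τ * phi z) • τ • (1 + z.re) • reCLM)) z :=
    ofRealCLM.hasFDerivAt.comp z ((hasFDerivAt_phi z).const_mul τ).exp
  rw [hexp.dz_eq]
  simp only [ContinuousLinearMap.comp_apply, smul_apply, reCLM_apply, one_re, I_re, ofRealCLM_apply,
    smul_eq_mul, mul_zero, ofReal_zero, sub_zero, real_smul]
  push_cast
  ring

theorem integral_inner_dbar_mul_eq_neg {E : Type*} [NormedAddCommGroup E] [InnerProductSpace ℂ E]
    {u v : ℂ → E} {ρ : ℂ → ℂ} (hu : ContDiff ℝ 1 u) (hv : ContDiff ℝ 1 v)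
    (hsupp : HasCompactSupport v) (hρ : ContDiff ℝ 1 ρ) :
    ∫ z, ⟪dbar u z, v z⟫_ℂ * ρ z
      = -∫ z, (⟪u z, dz v z⟫_ℂ * ρ z + ⟪u z, v z⟫_ℂ * dz ρ z) := by
  set g : ℂ → ℂ := fun w => ⟪u w, v w⟫_ℂ * ρ w
  have hg : ContDiff ℝ 1 g := (hu.inner ℂ hv).mul hρ
  have hg_supp : HasCompactSupport g :=
    hsupp.mono <| Function.support_subset_iff'.2 fun z hz => by
      simp [g, Function.notMem_support.1 hz]
  have hdz_g (z : ℂ) : dz g z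
      = ⟪dbar u z, v z⟫_ℂ * ρ z + (⟪u z, dz v z⟫_ℂ * ρ z + ⟪u z, v z⟫_ℂ * dz ρ z) := by
    have hu' := hu.differentiable one_ne_zero z
    have hv' := hv.differentiable one_ne_zero z
    rw [dz_mul (hu'.inner ℂ hv') (hρ.differentiable one_ne_zero z), dz_inner hu' hv']
    ring
  have hint_dz_g : Integrable (dz g) :=
    hg.continuous_dz.integrable_of_hasCompactSupport hg_supp.dz
  have hint_lhs : Integrable fun z => ⟪dbar u z, v z⟫_ℂ * ρ z :=
    ((hu.continuous_dbar.inner hv.continuous).mul hρ.continuous).integrable_of_hasCompactSupport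
      (hsupp.mono <| Function.support_subset_iff'.2 fun z hz => by
        simp [Function.notMem_support.1 hz])
  have hrhs : ∫ z, (⟪u z, dz v z⟫_ℂ * ρ z + ⟪u z, v z⟫_ℂ * dz ρ z)
      = (∫ z, dz g z) - ∫ z, ⟪dbar u z, v z⟫_ℂ * ρ z := by
    rw [← integral_sub hint_dz_g hint_lhs]
    simp only [hdz_g, add_sub_cancel_left]
  rw [hrhs, integral_dz_eq_zero hg hg_supp, zero_sub, neg_neg]

theorem weighted_integration_by_parts_general (n : ℕ)
    (u v : ℂ → EuclideanSpace ℂ (Fin n))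
    (hu : ContDiff ℝ 1 u)
    (hv : ContDiff ℝ 1 v) (hsupp : HasCompactSupport v)
    (hsub : tsupport v ⊆ ball (0 : ℂ) 1) (τ : ℝ) :
    ∫ z in ball (0 : ℂ) 1,
        ⟪dbar u z, v z⟫_ℂ * (Real.exp (τ * phi z) : ℂ)
      = -∫ z in ball (0 : ℂ) 1,
          ⟪u z, dz v z + ((τ / 2) * (1 + z.re)) • v z⟫_ℂ
            * (Real.exp (τ * phi z) : ℂ) := by
  have hout {z : ℂ} (hz : z ∉ ball (0 : ℂ) 1) : z ∉ tsupport v := fun h => hz (hsub h)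
  rw [setIntegral_eq_integral_of_forall_compl_eq_zero fun z hz => by
      simp [image_eq_zero_of_notMem_tsupport (hout hz)],
    setIntegral_eq_integral_of_forall_compl_eq_zero fun z hz => by
      simp [image_eq_zero_of_notMem_tsupport (hout hz), dz_of_notMem_tsupport (hout hz)],
    integral_inner_dbar_mul_eq_neg hu hv hsupp (contDiff_exp_phi τ)]
  congr 2 with z
  rw [dz_exp_phi, inner_add_right, inner_smul_right_eq_smul, real_smul]
  ring

/-- integration by parts with weight: for `u : ℂ → ℂⁿ` of class `C¹`,
`v : ℂ → ℂⁿ` of class `C¹` compactly supported in the unit disc, and `τ > 0`,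
`∫ ⟨∂u/∂z̄, v⟩ e^{τφ} = -∫ ⟨u, ∂v/∂z + (τ/2)·φ'·v⟩ e^{τφ}`, with `φ'(x+iy) = 1 + x`. -/
theorem weighted_integration_by_parts (n : ℕ)
    (u v : ℂ → EuclideanSpace ℂ (Fin n))
    (hu : ContDiff ℝ 1 u)
    (hv : ContDiff ℝ 1 v) (hsupp : HasCompactSupport v)
    (hsub : tsupport v ⊆ ball (0 : ℂ) 1) (τ : ℝ) (hτ : 0 < τ) :
    ∫ z in ball (0 : ℂ) 1,
        ⟪dbar u z, v z⟫_ℂ * (Real.exp (τ * phi z) : ℂ)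
      = -∫ z in ball (0 : ℂ) 1,
          ⟪u z, dz v z + ((τ / 2) * (1 + z.re)) • v z⟫_ℂ
            * (Real.exp (τ * phi z) : ℂ) :=
  weighted_integration_by_parts_general n u v hu hv hsupp hsub τ
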